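/- arXiv:2503.03772 — 4 statements merged into one kernel-verified Lean document; each statement's English description precedes it below -/
import Mathlib

section
/- Let G be a group acting on a finite set X, let x ∈ X, and let H be a subgroup of G conjugate to G_x (i.e. H = g⁻¹G_x g for some g ∈ G). Then the number of elements z in the orbit Gx whose stabilizer equals H is [N_G(H) : H], the index of H in its normalizer. -/
/-- The conjugate subgroup `g⁻¹ H g`. -/
def conjSub {G : Type*} [Group G] (g : G) (H : Subgroup G) : Subgroup G :=
  H.map (MulAut.conj g⁻¹).toMonoidHom

/-!
Replacing `x` by `g⁻¹ • x` we may assume `H = G_y`. A point `k • y` of the orbit has stabilizer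
`k G_y k⁻¹`, which equals `G_y` exactly when `k ∈ N_G(G_y)`; so the points counted form the orbit
of `y` under `N_G(G_y)`, whose size is `[N_G(G_y) : G_y]` by orbit–stabilizer.
-/

namespace MulAction

variable {G X : Type*} [Group G] [MulAction G X]

theorem conjSub_stabilizer (g : G) (x : X) :
    conjSub g (stabilizer G x) = stabilizer G (g⁻¹ • x) :=
  (stabilizer_smul_eq_stabilizer_map_conj g⁻¹ x).symm

theorem stabilizer_smul_eq_self_iff (k : G) (y : X) :
    stabilizer G (k • y) = stabilizer G y ↔ k ∈ Subgroup.normalizer (stabilizer G y : Set G) := by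
  rw [stabilizer_smul_eq_stabilizer_map_conj, Subgroup.mem_normalizer_iff_map_conj_eq]
  rfl

theorem setOf_mem_orbit_stabilizer_eq_eq_orbit_normalizer (y : X) :
    {z | z ∈ orbit G y ∧ stabilizer G z = stabilizer G y} =
      orbit (Subgroup.normalizer (stabilizer G y : Set G)) y := by
  ext z
  constructor
  · rintro ⟨⟨k, rfl⟩, hk⟩
    exact ⟨⟨k, (stabilizer_smul_eq_self_iff k y).mp hk⟩, rfl⟩
  · rintro ⟨⟨k, hk⟩, rfl⟩
    exact ⟨mem_orbit y k, (stabilizer_smul_eq_self_iff k y).mpr hk⟩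

theorem card_mem_orbit_stabilizer_eq_eq_relIndex (y : X) :
    Nat.card {z : X // z ∈ orbit G y ∧ stabilizer G z = stabilizer G y} =
      (stabilizer G y).relIndex (Subgroup.normalizer (stabilizer G y : Set G)) := by
  set N := Subgroup.normalizer (stabilizer G y : Set G)
  calc Nat.card {z : X // z ∈ orbit G y ∧ stabilizer G z = stabilizer G y}
      = (orbit N y).ncard := by
        rw [← setOf_mem_orbit_stabilizer_eq_eq_orbit_normalizer, ← Nat.card_coe_set_eq]
        rfl
    _ = (stabilizer N y).index := (index_stabilizer N y).symm
    -- `N` acts on `X` by restriction, so `N_y = G_y ∩ N`.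
    _ = (stabilizer G y).relIndex N := rfl

end MulAction

theorem card_orbit_inter_conjugate_stabilizer_eq_relindex_normalizer_general
    {G : Type*} [Group G] {X : Type*} [MulAction G X] (x : X)
    (H : Subgroup G) (hH : ∃ g : G, H = conjSub g (MulAction.stabilizer G x)) :
    Nat.card {z : X // z ∈ MulAction.orbit G x ∧ MulAction.stabilizer G z = H} =
      H.relIndex (Subgroup.normalizer (H : Set G)) := by
  obtain ⟨g, rfl⟩ := hH
  rw [MulAction.conjSub_stabilizer, ← MulAction.orbit_smul g⁻¹ x]
  exact MulAction.card_mem_orbit_stabilizer_eq_eq_relIndex (g⁻¹ • x)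

/-- Let `G` be a group acting on a finite set `X`, let `x ∈ X`,
and let `H` be a subgroup of `G` conjugate to the stabilizer of `x`
(i.e. `H = g⁻¹ (G_x) g` for some `g`). Then the number of elements `z` of the
orbit of `x` whose stabilizer equals `H` is the index `[N_G(H) : H]`. -/
theorem card_orbit_inter_conjugate_stabilizer_eq_relindex_normalizer
    {G : Type*} [Group G] {X : Type*} [MulAction G X] [Finite X] (x : X)
    (H : Subgroup G) (hH : ∃ g : G, H = conjSub g (MulAction.stabilizer G x)) :
    Nat.card {z : X // z ∈ MulAction.orbit G x ∧ MulAction.stabilizer G z = H} =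
      H.relIndex (Subgroup.normalizer (H : Set G)) :=
  card_orbit_inter_conjugate_stabilizer_eq_relindex_normalizer_general x H hH
end

section
/- Let G be a finite group acting on a finite set X. Then the number of bijective G-equivariant maps X → X is given by |Aut_G(X)| = ∏_{[H] ∈ Conj_G(X)} (α_{[H]})! · [N_G(H) : H]^{α_{[H]}}, where the product runs over the conjugacy classes of stabilizer subgroups with a fixed representative H of each class. -/
/-- `H ~_G K` : `K = g⁻¹ H g` for some `g ∈ G`. -/
def isConjSub {G : Type*} [Group G] (H K : Subgroup G) : Prop :=
  ∃ g : G, K = conjSub g H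

/-- `α_{[H]}` : the number of `G`-orbits contained in the box
`B_{[H]} = {x ∈ X : [G_x] = [H]}`. -/
noncomputable def alpha (G : Type*) [Group G] (X : Type*) [MulAction G X]
    (H : Subgroup G) : ℕ :=
  Nat.card {s : Set X // ∃ x : X, s = MulAction.orbit G x ∧
    isConjSub (MulAction.stabilizer G x) H}

/-!
Choose in every orbit `ω` a point `R ω` whose stabilizer is one of the representatives. An
equivariant bijection `σ` is determined by the points `σ (R ω)`, which have the same stabilizer as
`R ω` and meet every orbit exactly once; conversely every such choice of points extends to an
equivariant bijection. Such a choice amounts to a permutation `e` of the orbits preserving the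
conjugacy class of the stabilizers, together with, for each `ω`, a point of the orbit `e ω` whose
stabilizer is exactly `H = G_{R ω}`. These points form a single orbit of `N_G(H)`, in which every
point has stabilizer `H`, so there are `[N_G(H) : H]` of them; and there are `∏ α_{[H]}!`
permutations `e`.
-/

open MulAction Pointwise

namespace EquivariantAut

section Counting

variable {Ω α : Type*}

def bijectiveFiberEquivPi (q : α → Ω) (P : Ω → α → Prop) (e : Equiv.Perm Ω) :
    {z : {z : Ω → α // (∀ ω, P ω (z ω)) ∧ Function.Bijective fun ω => q (z ω)} //
        Equiv.ofBijective _ z.2.2 = e} ≃ ∀ ω, {x // q x = e ω ∧ P ω x} where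
  toFun z ω := ⟨z.1.1 ω, Equiv.ext_iff.mp z.2 ω, z.1.2.1 ω⟩
  invFun f := ⟨⟨fun ω => (f ω).1, fun ω => (f ω).2.2, by
      convert e.bijective using 1
      exact funext fun ω => (f ω).2.1⟩, Equiv.ext fun ω => (f ω).2.1⟩
  left_inv _ := rfl
  right_inv _ := rfl

lemma card_bijective_comp_eq_sum_perm [Fintype Ω] [DecidableEq Ω] [Finite α] (q : α → Ω)
    (P : Ω → α → Prop) :
    Nat.card {z : Ω → α // (∀ ω, P ω (z ω)) ∧ Function.Bijective fun ω => q (z ω)} =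
      ∑ e : Equiv.Perm Ω, ∏ ω, Nat.card {x // q x = e ω ∧ P ω x} := by
  rw [← Nat.card_congr (Equiv.sigmaFiberEquiv fun z => Equiv.ofBijective _ z.2.2),
    Nat.card_sigma]
  exact Finset.sum_congr rfl fun e _ => by
    rw [Nat.card_congr (bijectiveFiberEquivPi q P e), Nat.card_pi]

open Nat in
lemma sum_perm_prod_ite_eq [Fintype Ω] [DecidableEq Ω] {ι : Type*} [Fintype ι] [DecidableEq ι]
    (τ : Ω → ι) (m : ι → ℕ) :
    ∑ e : Equiv.Perm Ω, ∏ ω, (if τ (e ω) = τ ω then m (τ ω) else 0) =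
      ∏ i, (Nat.card {ω // τ ω = i})! * m i ^ Nat.card {ω // τ ω = i} := by
  have hperm : (Finset.univ.filter fun e : Equiv.Perm Ω => ∀ ω, τ (e ω) = τ ω).card =
      ∏ i, (Nat.card {ω // τ ω = i})! := by
    rw [← Fintype.card_subtype]
    simp only [Nat.card_eq_fintype_card, ← DomMulAct.stabilizer_card τ]
    exact Fintype.card_congr (Equiv.subtypeEquivRight fun e => by simp [funext_iff])
  have hm : ∏ ω, m (τ ω) = ∏ i, m i ^ Nat.card {ω // τ ω = i} := by
    simp only [← Fintype.prod_fiberwise' τ m, Finset.prod_const, Finset.card_univ,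
      Nat.card_eq_fintype_card]
  simp only [Fintype.prod_ite_zero, Finset.sum_ite, Finset.sum_const_zero, add_zero,
    Finset.sum_const, smul_eq_mul, hperm, hm, Finset.prod_mul_distrib]

end Counting

section GroupAction

variable {G : Type*} [Group G] {X : Type*} [MulAction G X]

lemma conjSub_eq_smul (g : G) (H : Subgroup G) : conjSub g H = ConjAct.toConjAct g⁻¹ • H := by
  ext n
  rw [conjSub, Subgroup.mem_map_equiv, Subgroup.mem_pointwise_smul_iff_inv_smul_mem,
    ← ConjAct.toConjAct_inv, inv_inv, ConjAct.toConjAct_smul, MulAut.conj_symm_apply, inv_inv]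

lemma isConjSub_iff_mem_orbit {H K : Subgroup G} :
    isConjSub H K ↔ K ∈ orbit (ConjAct G) H := by
  simp only [isConjSub, conjSub_eq_smul, mem_orbit_iff, eq_comm (a := K)]
  exact ⟨fun ⟨_, h⟩ => ⟨_, h⟩, fun ⟨c, h⟩ => ⟨(ConjAct.ofConjAct c)⁻¹, by simpa using h⟩⟩

lemma isConjSub_refl (H : Subgroup G) : isConjSub H H :=
  isConjSub_iff_mem_orbit.mpr (mem_orbit_self H)

lemma isConjSub_trans {H K L : Subgroup G} (hHK : isConjSub H K) (hKL : isConjSub K L) :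
    isConjSub H L := by
  have hK : K ∈ orbit (ConjAct G) H := isConjSub_iff_mem_orbit.mp hHK
  rw [isConjSub_iff_mem_orbit, ← orbit_eq_iff.mpr hK]
  exact isConjSub_iff_mem_orbit.mp hKL

lemma stabilizer_smul (g : G) (x : X) :
    stabilizer G (g • x) = ConjAct.toConjAct g • stabilizer G x := by
  ext n
  rw [Subgroup.mem_pointwise_smul_iff_inv_smul_mem, ← ConjAct.toConjAct_inv,
    ConjAct.toConjAct_smul, mem_stabilizer_iff, mem_stabilizer_iff, mul_smul, mul_smul,
    inv_smul_eq_iff, inv_inv]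

lemma isConjSub_stabilizer_of_mem_orbit {x y : X} (h : y ∈ orbit G x) :
    isConjSub (stabilizer G x) (stabilizer G y) := by
  obtain ⟨g, rfl⟩ := h
  rw [isConjSub_iff_mem_orbit, stabilizer_smul]
  exact mem_orbit _ _

lemma mem_orbit_normalizer_stabilizer_iff {x y : X} :
    x ∈ orbit (Subgroup.normalizer (stabilizer G y : Set G)) y ↔
      x ∈ orbit G y ∧ stabilizer G x = stabilizer G y := by
  constructor
  · rintro ⟨n, rfl⟩
    refine ⟨mem_orbit_of_mem_orbit_subgroup (mem_orbit _ _), ?_⟩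
    change stabilizer G ((n : G) • y) = _
    rw [stabilizer_smul, Subgroup.conjAct_pointwise_smul_eq_self n.2]
  · rintro ⟨⟨g, rfl⟩, hg⟩
    rw [stabilizer_smul, Subgroup.conjAct_pointwise_smul_iff] at hg
    exact ⟨⟨g, hg⟩, rfl⟩

lemma card_mem_orbit_stabilizer_eq (y : X) (H : Subgroup G)
    [Decidable (isConjSub (stabilizer G y) H)] :
    Nat.card {x // x ∈ orbit G y ∧ stabilizer G x = H} =
      if isConjSub (stabilizer G y) H then H.relIndex (Subgroup.normalizer (H : Set G)) else 0 := by
  split_ifs with hconj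
  · obtain ⟨c, hc⟩ := isConjSub_iff_mem_orbit.mp hconj
    obtain rfl : H = stabilizer G (ConjAct.ofConjAct c • y) := by
      rw [stabilizer_smul, ConjAct.toConjAct_ofConjAct]
      exact hc.symm
    rw [← orbit_smul (ConjAct.ofConjAct c) y, Nat.card_congr (Equiv.subtypeEquivRight fun _ =>
      mem_orbit_normalizer_stabilizer_iff.symm), Nat.card_coe_set_eq, ← index_stabilizer]
    rfl
  · rw [Nat.card_eq_zero]
    left
    refine ⟨fun ⟨x, hx, hxH⟩ => hconj ?_⟩
    exact hxH ▸ isConjSub_stabilizer_of_mem_orbit hx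

section OrbitSections

lemma stabilizer_apply_of_injective {σ : X → X} (hinj : Function.Injective σ)
    (hσ : ∀ (g : G) (x : X), σ (g • x) = g • σ x) (x : X) :
    stabilizer G (σ x) = stabilizer G x := by
  ext g
  rw [mem_stabilizer_iff, mem_stabilizer_iff, ← hσ, hinj.eq_iff]

def orbitMap (σ : X → X) (hσ : ∀ (g : G) (x : X), σ (g • x) = g • σ x) :
    orbitRel.Quotient G X → orbitRel.Quotient G X :=
  Quotient.map' σ fun _ _ ⟨g, h⟩ => ⟨g, by rw [← h, hσ]⟩

lemma bijective_iff_bijective_orbitMap {σ : X → X} (hσ : ∀ (g : G) (x : X), σ (g • x) = g • σ x)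
    (hstab : ∀ x, stabilizer G (σ x) = stabilizer G x) :
    Function.Bijective σ ↔ Function.Bijective (orbitMap σ hσ) := by
  constructor
  · rintro ⟨hinj, hsurj⟩
    refine ⟨fun ω ω' h => ?_, fun ω => ?_⟩
    · induction ω using Quotient.inductionOn' with | h x => ?_
      induction ω' using Quotient.inductionOn' with | h x' => ?_
      obtain ⟨g, hg : g • σ x' = σ x⟩ := Quotient.exact' h
      rw [← hσ, hinj.eq_iff] at hg
      exact Quotient.sound' ⟨g, hg⟩
    · induction ω using Quotient.inductionOn' with | h y => ?_
      obtain ⟨x, rfl⟩ := hsurj y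
      exact ⟨Quotient.mk'' x, rfl⟩
  · rintro ⟨hinj, hsurj⟩
    refine ⟨fun x x' h => ?_, fun y => ?_⟩
    · obtain ⟨g, rfl⟩ := Quotient.exact' (hinj (congrArg Quotient.mk'' h :
        orbitMap σ hσ (Quotient.mk'' x) = orbitMap σ hσ (Quotient.mk'' x')))
      rw [hσ] at h
      have hg : g ∈ stabilizer G (σ x') := h
      rw [hstab] at hg
      exact hg
    · obtain ⟨ω, hω⟩ := hsurj (Quotient.mk'' y)
      induction ω using Quotient.inductionOn' with | h x => ?_
      obtain ⟨g, hg : g • σ x = y⟩ := Quotient.exact' hω.symm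
      exact ⟨g • x, by rw [hσ, hg]⟩

variable (R : orbitRel.Quotient G X → X) (hR : ∀ ω, Quotient.mk'' (R ω) = ω)
include hR

lemma mk_eq_iff_mem_orbit_section {x : X} {ω : orbitRel.Quotient G X} :
    Quotient.mk'' x = ω ↔ x ∈ orbit G (R ω) := by
  rw [← hR ω, Quotient.eq'', orbitRel_apply, hR]

lemma exists_smul_section_eq (x : X) : ∃ g : G, g • R (Quotient.mk'' x) = x :=
  (mk_eq_iff_mem_orbit_section R hR).mp rfl

lemma alpha_eq_card_section (H : Subgroup G) :
    alpha G X H = Nat.card {ω // isConjSub (stabilizer G (R ω)) H} := by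
  refine (Nat.card_congr (Equiv.ofBijective
    (fun ω => ⟨orbit G (R ω.1), R ω.1, rfl, ω.2⟩) ⟨fun ω ω' h => ?_, ?_⟩)).symm
  · have h : R ω.1 ∈ orbit G (R ω'.1) := orbit_eq_iff.mp (congrArg Subtype.val h)
    rw [← mk_eq_iff_mem_orbit_section R hR, hR] at h
    exact Subtype.ext h
  · rintro ⟨_, x, rfl, hx⟩
    have hxR := (mk_eq_iff_mem_orbit_section R hR).mp (rfl : Quotient.mk'' x = _)
    exact ⟨⟨Quotient.mk'' x, isConjSub_trans (isConjSub_stabilizer_of_mem_orbit hxR) hx⟩,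
      Subtype.ext (orbit_eq_iff.mpr (mem_orbit_symm.mp hxR))⟩

lemma orbitMap_apply_eq {σ : X → X} (hσ : ∀ (g : G) (x : X), σ (g • x) = g • σ x) (ω) :
    orbitMap σ hσ ω = Quotient.mk'' (σ (R ω)) := by
  conv_lhs => rw [← hR ω]
  rfl

noncomputable def extendFromSection (z : orbitRel.Quotient G X → X) : X → X :=
  fun x => (exists_smul_section_eq R hR x).choose • z (Quotient.mk'' x)

variable {z : orbitRel.Quotient G X → X}

lemma extendFromSection_smul_section (hz : ∀ ω, stabilizer G (R ω) ≤ stabilizer G (z ω))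
    (g : G) (ω : orbitRel.Quotient G X) :
    extendFromSection R hR z (g • R ω) = g • z ω := by
  have hx : Quotient.mk'' (g • R ω) = ω := (Quotient.sound' (mem_orbit _ g)).trans (hR ω)
  have hg' := (exists_smul_section_eq R hR (g • R ω)).choose_spec
  set g' := (exists_smul_section_eq R hR (g • R ω)).choose
  change g' • z (Quotient.mk'' (g • R ω)) = g • z ω
  rw [hx] at hg' ⊢
  have hmem : g⁻¹ * g' ∈ stabilizer G (z ω) :=
    hz ω (by rw [mem_stabilizer_iff, mul_smul, hg', inv_smul_smul])
  rw [mem_stabilizer_iff, mul_smul, inv_smul_eq_iff] at hmem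
  exact hmem

lemma extendFromSection_section (hz : ∀ ω, stabilizer G (R ω) ≤ stabilizer G (z ω))
    (ω : orbitRel.Quotient G X) : extendFromSection R hR z (R ω) = z ω := by
  simpa using extendFromSection_smul_section R hR hz 1 ω

lemma extendFromSection_smul (hz : ∀ ω, stabilizer G (R ω) ≤ stabilizer G (z ω)) (g : G)
    (x : X) : extendFromSection R hR z (g • x) = g • extendFromSection R hR z x := by
  obtain ⟨g', hg'⟩ := exists_smul_section_eq R hR x
  rw [← hg', ← mul_smul, extendFromSection_smul_section R hR hz,
    extendFromSection_smul_section R hR hz, mul_smul]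

lemma stabilizer_extendFromSection (hz : ∀ ω, stabilizer G (z ω) = stabilizer G (R ω))
    (x : X) : stabilizer G (extendFromSection R hR z x) = stabilizer G x := by
  obtain ⟨g, hg⟩ := exists_smul_section_eq R hR x
  rw [← hg, extendFromSection_smul_section R hR fun ω => (hz ω).ge, stabilizer_smul,
    stabilizer_smul, hz]

noncomputable def equivariantPermEquivSection :
    {σ : X → X // Function.Bijective σ ∧ ∀ (g : G) (x : X), σ (g • x) = g • σ x} ≃
      {z : orbitRel.Quotient G X → X // (∀ ω, stabilizer G (z ω) = stabilizer G (R ω)) ∧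
        Function.Bijective fun ω => (Quotient.mk'' (z ω) : orbitRel.Quotient G X)} where
  toFun σ :=
    have hstab := stabilizer_apply_of_injective σ.2.1.1 σ.2.2
    ⟨fun ω => σ.1 (R ω), fun ω => hstab (R ω), by
      convert (bijective_iff_bijective_orbitMap σ.2.2 hstab).1 σ.2.1 using 1
      exact (funext (orbitMap_apply_eq R hR σ.2.2)).symm⟩
  invFun z :=
    have hz : ∀ ω, stabilizer G (R ω) ≤ stabilizer G (z.1 ω) := fun ω => (z.2.1 ω).ge
    have hσ := extendFromSection_smul R hR hz
    ⟨extendFromSection R hR z.1, (bijective_iff_bijective_orbitMap hσ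
      (stabilizer_extendFromSection R hR z.2.1)).2 (by
        simpa only [funext (orbitMap_apply_eq R hR hσ), extendFromSection_section R hR hz]
          using z.2.2), hσ⟩
  left_inv σ := Subtype.ext <| funext fun x => by
    obtain ⟨g, hg⟩ := exists_smul_section_eq R hR x
    rw [← hg]
    have hz : ∀ ω, stabilizer G (R ω) ≤ stabilizer G (σ.1 (R ω)) := fun ω =>
      (stabilizer_apply_of_injective σ.2.1.1 σ.2.2 (R ω)).ge
    exact (extendFromSection_smul_section R hR hz g _).trans (σ.2.2 g _).symm
  right_inv z := Subtype.ext <| funext <| extendFromSection_section R hR fun ω => (z.2.1 ω).ge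

end OrbitSections

lemma exists_section_stabilizer_mem (S : Set (Subgroup G))
    (hS : ∀ x : X, ∃ H ∈ S, isConjSub (stabilizer G x) H) :
    ∃ R : orbitRel.Quotient G X → X, (∀ ω, Quotient.mk'' (R ω) = ω) ∧
      ∀ ω, stabilizer G (R ω) ∈ S := by
  have : ∀ ω : orbitRel.Quotient G X, ∃ x, Quotient.mk'' x = ω ∧ stabilizer G x ∈ S := by
    intro ω
    induction ω using Quotient.inductionOn' with | h x => ?_
    obtain ⟨H, hH, hxH⟩ := hS x
    obtain ⟨c, hc : c • stabilizer G x = H⟩ := isConjSub_iff_mem_orbit.mp hxH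
    refine ⟨ConjAct.ofConjAct c • x, Quotient.sound' (mem_orbit _ _), ?_⟩
    rwa [stabilizer_smul, ConjAct.toConjAct_ofConjAct, hc]
  choose R hR hRS using this
  exact ⟨R, hR, hRS⟩

end GroupAction

end EquivariantAut

open EquivariantAut

theorem card_equivariant_aut_general
    {G : Type*} [Group G] {X : Type*} [MulAction G X] [Finite X]
    (reps : Finset (Subgroup G))
    (hcover : ∀ x : X, ∃ H ∈ reps, isConjSub (MulAction.stabilizer G x) H)
    (hdistinct : ∀ H ∈ reps, ∀ K ∈ reps, isConjSub H K → H = K) :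
    Nat.card {σ : X → X // Function.Bijective σ ∧
        ∀ (g : G) (z : X), σ (g • z) = g • σ z} =
      ∏ H ∈ reps, (alpha G X H).factorial *
        (H.relIndex (Subgroup.normalizer (H : Set G))) ^ alpha G X H := by
  classical
  obtain ⟨R, hR, hRreps⟩ := exists_section_stabilizer_mem (reps : Set (Subgroup G)) hcover
  let τ : orbitRel.Quotient G X → reps := fun ω => ⟨_, hRreps ω⟩
  have hτ : ∀ ω (H : reps), isConjSub (stabilizer G (R ω)) H ↔ τ ω = H :=
    fun ω H => ⟨fun h => Subtype.ext (hdistinct _ (hRreps ω) _ H.2 h),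
      fun h => h ▸ isConjSub_refl _⟩
  have hconj : ∀ ω ω', isConjSub (stabilizer G (R ω)) (stabilizer G (R ω')) ↔ τ ω = τ ω' :=
    fun ω ω' => hτ ω (τ ω')
  have hα : ∀ H : reps, alpha G X H = Nat.card {ω // τ ω = H} := fun H => by
    rw [alpha_eq_card_section R hR]
    simp only [hτ]
  have := Fintype.ofFinite (orbitRel.Quotient G X)
  rw [Nat.card_congr (equivariantPermEquivSection R hR),
    card_bijective_comp_eq_sum_perm Quotient.mk'' fun ω x => stabilizer G x = stabilizer G (R ω)]
  simp only [mk_eq_iff_mem_orbit_section R hR, card_mem_orbit_stabilizer_eq, hconj]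
  rw [sum_perm_prod_ite_eq τ fun H => H.1.relIndex (Subgroup.normalizer (H.1 : Set G)),
    ← Finset.prod_coe_sort reps]
  simp only [hα]

/-- Let `G` be a finite group acting on a finite set `X`, and let
`reps` be a set of representatives of the classes in `Conj_G(X)`.  Then
`|Aut_G(X)| = ∏_{[H] ∈ Conj_G(X)} (α_{[H]})! · [N_G(H) : H]^{α_{[H]}}`. -/
theorem card_equivariant_aut
    {G : Type*} [Group G] [Finite G] {X : Type*} [MulAction G X] [Finite X]
    (reps : Finset (Subgroup G))
    (hmem : ∀ H ∈ reps, ∃ x : X, MulAction.stabilizer G x = H)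
    (hcover : ∀ x : X, ∃ H ∈ reps, isConjSub (MulAction.stabilizer G x) H)
    (hdistinct : ∀ H ∈ reps, ∀ K ∈ reps, isConjSub H K → H = K) :
    Nat.card {σ : X → X // Function.Bijective σ ∧
        ∀ (g : G) (z : X), σ (g • z) = g • σ z} =
      ∏ H ∈ reps, (alpha G X H).factorial *
        (H.relIndex (Subgroup.normalizer (H : Set G))) ^ alpha G X H :=
  card_equivariant_aut_general reps hcover hdistinct
end

section
/- Let G be a finite group acting on a finite set X. Then the monoid End_G(X) is generated by its group of units together with the maps [x↦y]: every G-equivariant map X → X is a finite composition of bijective G-equivariant maps and maps of the form [x↦y] with x, y ∈ X and G_x ⊆ G_y; that is, End_G(X) = ⟨ Aut_G(X) ∪ {[x↦y] : x, y ∈ X, G_x ⊆ G_y} ⟩ as a monoid. -/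
open Classical

/-- The map `[x↦y]` sending `g • x` to `g • y` for every `g ∈ G` and fixing all
elements outside the orbit of `x` (well-defined when `G_x ≤ G_y`). -/
noncomputable def collapseMap (G : Type*) [Group G] {X : Type*} [MulAction G X]
    (x y : X) : X → X := fun z =>
  if h : z ∈ MulAction.orbit G x then (MulAction.mem_orbit_iff.mp h).choose • y else z

section Aux

variable {G : Type*} [Group G] {X : Type*} [MulAction G X]

lemma mem_orbit_smul_iff' (g : G) (z x : X) :
    g • z ∈ MulAction.orbit G x ↔ z ∈ MulAction.orbit G x := by
  simp only [MulAction.mem_orbit_iff]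
  constructor
  · rintro ⟨k, hk⟩
    exact ⟨g⁻¹ * k, by rw [mul_smul, hk, inv_smul_smul]⟩
  · rintro ⟨k, hk⟩
    exact ⟨g * k, by rw [mul_smul, hk]⟩

lemma collapseMap_apply_eq (x y : X)
    (hxy : MulAction.stabilizer G x ≤ MulAction.stabilizer G y)
    {z : X} {g : G} (hz : g • x = z) :
    collapseMap G x y z = g • y := by
  have hmem : z ∈ MulAction.orbit G x := MulAction.mem_orbit_iff.mpr ⟨g, hz⟩
  have h1 : collapseMap G x y z = (MulAction.mem_orbit_iff.mp hmem).choose • y := by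
    unfold collapseMap
    rw [dif_pos hmem]
  rw [h1]
  have hk : (MulAction.mem_orbit_iff.mp hmem).choose • x = z :=
    (MulAction.mem_orbit_iff.mp hmem).choose_spec
  set k := (MulAction.mem_orbit_iff.mp hmem).choose with hkdef
  have hks : g⁻¹ * k ∈ MulAction.stabilizer G x := by
    rw [MulAction.mem_stabilizer_iff, mul_smul, hk, ← hz, inv_smul_smul]
  have h2 := hxy hks
  rw [MulAction.mem_stabilizer_iff] at h2
  calc k • y = g • ((g⁻¹ * k) • y) := by rw [mul_smul, smul_inv_smul]
    _ = g • y := by rw [h2]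

lemma collapseMap_apply_of_notMem (x y z : X) (hz : z ∉ MulAction.orbit G x) :
    collapseMap G x y z = z := by
  unfold collapseMap
  rw [dif_neg hz]

lemma collapseMap_equivariant {x y : X}
    (hxy : MulAction.stabilizer G x ≤ MulAction.stabilizer G y) :
    ∀ (g : G) (z : X), collapseMap G x y (g • z) = g • collapseMap G x y z := by
  intro g z
  by_cases hz : z ∈ MulAction.orbit G x
  · obtain ⟨k, hk⟩ := MulAction.mem_orbit_iff.mp hz
    rw [collapseMap_apply_eq x y hxy hk]
    have hk2 : (g * k) • x = g • z := by rw [mul_smul, hk]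
    rw [collapseMap_apply_eq x y hxy hk2, mul_smul]
  · rw [collapseMap_apply_of_notMem x y z hz,
      collapseMap_apply_of_notMem x y (g • z) (by rwa [mem_orbit_smul_iff'])]

/-- The submonoid of `G`-equivariant self-maps. -/
def equivSubmonoid (G : Type*) [Group G] (X : Type*) [MulAction G X] :
    Submonoid (Function.End X) where
  carrier := {f | ∀ (g : G) (z : X), f (g • z) = g • f z}
  one_mem' := fun _ _ => rfl
  mul_mem' := by
    intro a b ha hb g z
    show a (b (g • z)) = g • a (b z)
    rw [hb, ha]

lemma mem_closure_of_equivariant [Finite X] (n : ℕ) :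
    ∀ f : Function.End X, (∀ (g : G) (z : X), f (g • z) = g • f z) →
    Set.ncard {z | f z ≠ z} ≤ n →
    f ∈ Submonoid.closure {f : Function.End X |
        ((∀ (g : G) (z : X), f (g • z) = g • f z) ∧ Function.Bijective f) ∨
        (∃ x y : X, MulAction.stabilizer G x ≤ MulAction.stabilizer G y ∧
          f = collapseMap G x y)} := by
  induction n with
  | zero =>
    intro f hf hn
    have hempty : {z | f z ≠ z} = ∅ :=
      (Set.ncard_eq_zero (Set.toFinite _)).mp (Nat.le_zero.mp hn)
    have hfone : f = 1 := by
      funext z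
      by_contra hz
      exact Set.eq_empty_iff_forall_notMem.mp hempty z hz
    rw [hfone]
    exact Submonoid.one_mem _
  | succ n ih =>
    intro f hf hn
    by_cases hbij : Function.Bijective f
    · exact Submonoid.subset_closure (Or.inl ⟨hf, hbij⟩)
    · have hnsurj : ¬Function.Surjective f := fun h =>
        hbij (Finite.surjective_iff_bijective.mp h)
      simp only [Function.Surjective, not_forall, not_exists] at hnsurj
      obtain ⟨a, ha⟩ := hnsurj
      set p := f a with hp
      have hstab : MulAction.stabilizer G a ≤ MulAction.stabilizer G p := by
        intro g hg
        rw [MulAction.mem_stabilizer_iff] at hg ⊢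
        rw [hp, ← hf, hg]
      have hrange : ∀ z : X, f z ∉ MulAction.orbit G a := by
        intro z hz
        obtain ⟨k, hk⟩ := MulAction.mem_orbit_iff.mp hz
        exact ha (k⁻¹ • z) (by rw [hf, ← hk, inv_smul_smul])
      set h : Function.End X := fun z => if z ∈ MulAction.orbit G a then z else f z with hh
      have hhmem : ∀ z : X, z ∈ MulAction.orbit G a → h z = z := by
        intro z hz; show (if z ∈ MulAction.orbit G a then z else f z) = z; rw [if_pos hz]
      have hhnmem : ∀ z : X, z ∉ MulAction.orbit G a → h z = f z := by
        intro z hz; show (if z ∈ MulAction.orbit G a then z else f z) = f z; rw [if_neg hz]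
      have hheq : ∀ (g : G) (z : X), h (g • z) = g • h z := by
        intro g z
        by_cases hz : z ∈ MulAction.orbit G a
        · rw [hhmem z hz, hhmem (g • z) (by rwa [mem_orbit_smul_iff'])]
        · rw [hhnmem z hz, hhnmem (g • z) (by rwa [mem_orbit_smul_iff']), hf]
      have hfactor : f = (show Function.End X from collapseMap G a p) * h := by
        funext z
        show f z = collapseMap G a p (h z)
        by_cases hz : z ∈ MulAction.orbit G a
        · obtain ⟨k, hk⟩ := MulAction.mem_orbit_iff.mp hz
          rw [hhmem z hz, collapseMap_apply_eq a p hstab hk, hp, ← hf, hk]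
        · rw [hhnmem z hz, collapseMap_apply_of_notMem a p (f z) (hrange z)]
      have hane : a ∈ {z : X | f z ≠ z} := fun hfa => ha a hfa
      have hsub : {z | h z ≠ z} ⊆ {z : X | f z ≠ z} \ {a} := by
        intro z hz2
        simp only [Set.mem_setOf_eq] at hz2
        by_cases hz : z ∈ MulAction.orbit G a
        · exact absurd (hhmem z hz) hz2
        · refine ⟨show f z ≠ z by rw [← hhnmem z hz]; exact hz2, ?_⟩
          intro hza
          rw [Set.mem_singleton_iff] at hza
          exact hz (by rw [hza]; exact MulAction.mem_orbit_self a)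
      have hcard : Set.ncard {z | h z ≠ z} ≤ n := by
        have h1 : Set.ncard {z | h z ≠ z} ≤ Set.ncard ({z : X | f z ≠ z} \ {a}) :=
          Set.ncard_le_ncard hsub (Set.toFinite _)
        have h2 : Set.ncard ({z : X | f z ≠ z} \ {a}) = Set.ncard {z : X | f z ≠ z} - 1 :=
          Set.ncard_diff_singleton_of_mem hane
        have h3 : 0 < Set.ncard {z : X | f z ≠ z} :=
          (Set.ncard_pos (Set.toFinite _)).mpr ⟨a, hane⟩
        omega
      rw [hfactor]
      exact Submonoid.mul_mem _
        (Submonoid.subset_closure (Or.inr ⟨a, p, hstab, rfl⟩))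
        (ih h hheq hcard)

end Aux

/-- Let `G` be a finite group acting on a finite set `X`.  The
monoid `End_G(X)` of `G`-equivariant self-maps of `X` (a submonoid of
`Function.End X`) is generated by the bijective `G`-equivariant maps together
with the maps `[x↦y]` for `x, y ∈ X` with `G_x ⊆ G_y`. -/
theorem end_eq_closure_aut_union_collapsings
    {G : Type*} [Group G] [Finite G] {X : Type*} [MulAction G X] [Finite X] :
    (Submonoid.closure {f : Function.End X |
        ((∀ (g : G) (z : X), f (g • z) = g • f z) ∧ Function.Bijective f) ∨
        (∃ x y : X, MulAction.stabilizer G x ≤ MulAction.stabilizer G y ∧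
          f = collapseMap G x y)} : Set (Function.End X)) =
      {f : Function.End X | ∀ (g : G) (z : X), f (g • z) = g • f z} := by
  ext f
  simp only [SetLike.mem_coe, Set.mem_setOf_eq]
  constructor
  · intro hf
    have hle : Submonoid.closure {f : Function.End X |
        ((∀ (g : G) (z : X), f (g • z) = g • f z) ∧ Function.Bijective f) ∨
        (∃ x y : X, MulAction.stabilizer G x ≤ MulAction.stabilizer G y ∧
          f = collapseMap G x y)} ≤ equivSubmonoid G X := by
      apply Submonoid.closure_le.mpr
      rintro f (⟨hfe, -⟩ | ⟨x, y, hxy, rfl⟩)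
      · exact hfe
      · exact collapseMap_equivariant hxy
    exact hle hf
  · intro hf
    exact mem_closure_of_equivariant (Set.ncard {z | f z ≠ z}) f hf le_rfl
end

section
/- Let G be a group acting on a set X. A G-equivariant map τ : X → X is a fixing elementary collapsing if and only if there exist x, y ∈ X with G_x ⊆ G_y and Gx ≠ Gy such that τ = [x↦y]. -/
open Classical

/-- `τ` is a fixing elementary collapsing: `τ` is `G`-equivariant and there are
`x, y ∈ X` with `Gx ≠ Gy` such that
`ker τ = Δ ∪ {(g·x,g·y),(g·y,g·x) : g ∈ G} ∪ {(g·x,h·x) : h⁻¹g ∈ G_y}` and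
`Fix(τ) = X ∖ Gx`. -/
def IsFixingElemCollapsing (G : Type*) [Group G] {X : Type*} [MulAction G X]
    (τ : X → X) : Prop :=
  (∀ (g : G) (z : X), τ (g • z) = g • τ z) ∧
  ∃ x y : X, MulAction.orbit G x ≠ MulAction.orbit G y ∧
    ({p : X × X | τ p.1 = τ p.2} =
      {p : X × X | p.1 = p.2} ∪
      {p : X × X | ∃ g : G, p = (g • x, g • y) ∨ p = (g • y, g • x)} ∪
      {p : X × X | ∃ g h : G, p = (g • x, h • x) ∧ h⁻¹ * g ∈ MulAction.stabilizer G y}) ∧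
    {z : X | τ z = z} = Set.univ \ MulAction.orbit G x

/-! A fixing elementary collapsing fixes `X ∖ Gx` and identifies `x` with `y ∉ Gx`, so
`τ x = y`; equivariance then determines `τ` on `Gx` as `g • x ↦ g • y`, which is `[x↦y]`.
Conversely `[x↦y]` is equivariant, and its kernel and fixed points are read off orbitwise. -/

open MulAction

section

variable {G : Type*} [Group G] {X : Type*} [MulAction G X]

lemma MulAction.smul_mem_orbit_iff {g : G} {z x : X} :
    g • z ∈ orbit G x ↔ z ∈ orbit G x := by
  rw [mem_orbit_symm, orbit_smul, ← mem_orbit_symm]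

lemma MulAction.notMem_orbit_of_orbit_ne {x y : X} (h : orbit G x ≠ orbit G y) :
    y ∉ orbit G x :=
  fun hy => h (orbit_eq_iff.mpr (mem_orbit_symm.mp hy))

lemma stabilizer_le_stabilizer_apply_of_smul_comm {τ : X → X}
    (hτ : ∀ (g : G) (z : X), τ (g • z) = g • τ z) (z : X) :
    stabilizer G z ≤ stabilizer G (τ z) := by
  intro g hg
  rw [mem_stabilizer_iff] at hg ⊢
  rw [← hτ, hg]

lemma collapseMap_of_notMem_orbit {x : X} (y : X) {z : X} (hz : z ∉ orbit G x) :
    collapseMap G x y z = z := by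
  simp [collapseMap, hz]

lemma collapseMap_smul {x y : X} (hst : stabilizer G x ≤ stabilizer G y) (g : G) :
    collapseMap G x y (g • x) = g • y := by
  have hmem : g • x ∈ orbit G x := mem_orbit x g
  have hk : (mem_orbit_iff.mp hmem).choose • x = g • x := (mem_orbit_iff.mp hmem).choose_spec
  set k := (mem_orbit_iff.mp hmem).choose
  have hky : (g⁻¹ * k) • y = y := hst (by rw [mem_stabilizer_iff, mul_smul, hk, inv_smul_smul])
  rw [mul_smul, inv_smul_eq_iff] at hky
  simpa only [collapseMap, dif_pos hmem] using hky

lemma collapseMap_smul_comm {x y : X} (hst : stabilizer G x ≤ stabilizer G y) (g : G) (z : X) :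
    collapseMap G x y (g • z) = g • collapseMap G x y z := by
  by_cases hz : z ∈ orbit G x
  · obtain ⟨h, rfl⟩ := hz
    rw [smul_smul, collapseMap_smul hst, collapseMap_smul hst, mul_smul]
  · rw [collapseMap_of_notMem_orbit y hz,
      collapseMap_of_notMem_orbit y (smul_mem_orbit_iff.not.mpr hz)]

lemma collapseMap_smul_eq_collapseMap_smul_iff {x y : X}
    (hst : stabilizer G x ≤ stabilizer G y) (g h : G) :
    collapseMap G x y (g • x) = collapseMap G x y (h • x) ↔ h⁻¹ * g ∈ stabilizer G y := by
  rw [collapseMap_smul hst, collapseMap_smul hst, mem_stabilizer_iff, mul_smul, inv_smul_eq_iff]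

lemma collapseMap_fixedPoints {x y : X} (hst : stabilizer G x ≤ stabilizer G y) (hxy : x ≠ y) :
    {z : X | collapseMap G x y z = z} = Set.univ \ orbit G x := by
  ext z
  simp only [Set.mem_ofPred_eq, Set.mem_sdiff, Set.mem_univ, true_and]
  refine ⟨?_, collapseMap_of_notMem_orbit y⟩
  rintro hz ⟨g, rfl⟩
  rw [collapseMap_smul hst] at hz
  exact hxy (smul_left_cancel g hz).symm

lemma collapseMap_ker {x y : X} (hst : stabilizer G x ≤ stabilizer G y) (hy : y ∉ orbit G x) :
    {p : X × X | collapseMap G x y p.1 = collapseMap G x y p.2} =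
      {p : X × X | p.1 = p.2} ∪
      {p : X × X | ∃ g : G, p = (g • x, g • y) ∨ p = (g • y, g • x)} ∪
      {p : X × X | ∃ g h : G, p = (g • x, h • x) ∧ h⁻¹ * g ∈ stabilizer G y} := by
  have hfixY : ∀ g : G, collapseMap G x y (g • y) = g • y := fun g =>
    collapseMap_of_notMem_orbit y (smul_mem_orbit_iff.not.mpr hy)
  ext ⟨a, b⟩
  simp only [Set.mem_ofPred_eq, Set.mem_union, Prod.mk.injEq]
  constructor
  · intro hab
    by_cases ha : a ∈ orbit G x <;> by_cases hb : b ∈ orbit G x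
    · obtain ⟨g, rfl⟩ := ha
      obtain ⟨h, rfl⟩ := hb
      exact Or.inr ⟨g, h, ⟨rfl, rfl⟩, (collapseMap_smul_eq_collapseMap_smul_iff hst g h).mp hab⟩
    · obtain ⟨g, rfl⟩ := ha
      rw [collapseMap_smul hst, collapseMap_of_notMem_orbit y hb] at hab
      exact Or.inl (Or.inr ⟨g, Or.inl ⟨rfl, hab.symm⟩⟩)
    · obtain ⟨h, rfl⟩ := hb
      rw [collapseMap_smul hst, collapseMap_of_notMem_orbit y ha] at hab
      exact Or.inl (Or.inr ⟨h, Or.inr ⟨hab, rfl⟩⟩)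
    · rw [collapseMap_of_notMem_orbit y ha, collapseMap_of_notMem_orbit y hb] at hab
      exact Or.inl (Or.inl hab)
  · rintro ((rfl | ⟨g, ⟨rfl, rfl⟩ | ⟨rfl, rfl⟩⟩) | ⟨g, h, ⟨rfl, rfl⟩, hgh⟩)
    · rfl
    · rw [collapseMap_smul hst, hfixY]
    · rw [collapseMap_smul hst, hfixY]
    · exact (collapseMap_smul_eq_collapseMap_smul_iff hst g h).mpr hgh

lemma eq_collapseMap_of_smul_comm {τ : X → X} (hτ : ∀ (g : G) (z : X), τ (g • z) = g • τ z)
    {x : X} (hfix : ∀ z ∉ orbit G x, τ z = z) :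
    τ = collapseMap G x (τ x) := by
  funext z
  by_cases hz : z ∈ orbit G x
  · obtain ⟨g, rfl⟩ := hz
    rw [hτ, collapseMap_smul (stabilizer_le_stabilizer_apply_of_smul_comm hτ x)]
  · rw [collapseMap_of_notMem_orbit _ hz, hfix z hz]

end

theorem isFixingElemCollapsing_iff_general
    {G : Type*} [Group G] {X : Type*} [MulAction G X] (τ : X → X) :
    IsFixingElemCollapsing G τ ↔
      ∃ x y : X, MulAction.stabilizer G x ≤ MulAction.stabilizer G y ∧
        MulAction.orbit G x ≠ MulAction.orbit G y ∧ τ = collapseMap G x y := by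
  constructor
  · rintro ⟨hτ, x, y, hne, hker, hfixed⟩
    have hfix : ∀ z ∉ orbit G x, τ z = z := fun z hz =>
      (Set.ext_iff.mp hfixed z).mpr ⟨trivial, hz⟩
    have hτxy : τ x = τ y := by
      change (x, y) ∈ {p : X × X | τ p.1 = τ p.2}
      rw [hker]
      exact Or.inl (Or.inr ⟨1, Or.inl (by rw [one_smul, one_smul])⟩)
    have hτx : τ x = y := hτxy.trans (hfix y (notMem_orbit_of_orbit_ne hne))
    refine ⟨x, y, hτx ▸ stabilizer_le_stabilizer_apply_of_smul_comm hτ x, hne, ?_⟩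
    exact hτx ▸ eq_collapseMap_of_smul_comm hτ hfix
  · rintro ⟨x, y, hst, hne, rfl⟩
    have hy := notMem_orbit_of_orbit_ne hne
    have hxy : x ≠ y := fun h => hy (h ▸ mem_orbit_self x)
    exact ⟨collapseMap_smul_comm hst, x, y, hne, collapseMap_ker hst hy,
      collapseMap_fixedPoints hst hxy⟩

/-- a `G`-equivariant map `τ : X → X` is a fixing elementary
collapsing if and only if there exist `x, y ∈ X` with `G_x ⊆ G_y` and
`Gx ≠ Gy` such that `τ = [x↦y]`. -/
theorem isFixingElemCollapsing_iff
    {G : Type*} [Group G] {X : Type*} [MulAction G X] (τ : X → X)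
    (hτ : ∀ (g : G) (z : X), τ (g • z) = g • τ z) :
    IsFixingElemCollapsing G τ ↔
      ∃ x y : X, MulAction.stabilizer G x ≤ MulAction.stabilizer G y ∧
        MulAction.orbit G x ≠ MulAction.orbit G y ∧ τ = collapseMap G x y :=
  isFixingElemCollapsing_iff_general τ
end
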